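/- Let G be the graph on the 21 vertices {x_i, y_i, z_i : i ∈ ℤ/7ℤ} with edges {x_i, x_{i+1}}, {x_i, y_i}, {y_i, z_i}, {z_i, y_{i+1}}, {z_i, z_{i+3}} (indices modulo 7). Define μ : V → ℤ by μ(x_i) = μ(z_i) = 4 and μ(y_i) = 3 for all i. Then (μ, 10) ∈ U^(2). -/

import Mathlib

variable {V : Type*}

/-- A stable (independent) set of a graph. -/
def IsStableSet (G : SimpleGraph V) (S : Set V) : Prop :=
  ∀ u ∈ S, ∀ v ∈ S, ¬ G.Adj u v

/-- The vertex set of a cycle subgraph of `G`, given by an injective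
parametrization `c : ZMod m → V` (`m ≥ 3`) with consecutive vertices adjacent. -/
def IsCycleSet (G : SimpleGraph V) (C : Set V) : Prop :=
  ∃ (m : ℕ) (c : ZMod m → V), 3 ≤ m ∧ Function.Injective c ∧
    (∀ i, G.Adj (c i) (c (i + 1))) ∧ C = Set.range c

/-- The vertex set of an odd cycle subgraph of `G`. -/
def IsOddCycleSet (G : SimpleGraph V) (C : Set V) : Prop :=
  ∃ (m : ℕ) (c : ZMod m → V), 3 ≤ m ∧ Odd m ∧ Function.Injective c ∧
    (∀ i, G.Adj (c i) (c (i + 1))) ∧ C = Set.range c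

/-- The vertex set of a chordless odd cycle subgraph of `G`: the only edges of `G`
between vertices of the cycle are the cycle edges. -/
def IsChordlessOddCycleSet (G : SimpleGraph V) (C : Set V) : Prop :=
  ∃ (m : ℕ) (c : ZMod m → V), 3 ≤ m ∧ Odd m ∧ Function.Injective c ∧
    (∀ i, G.Adj (c i) (c (i + 1))) ∧
    (∀ i j, G.Adj (c i) (c j) → j = i + 1 ∨ i = j + 1) ∧
    C = Set.range c

/-- A maximal clique of `G`. -/
def IsMaximalClique (G : SimpleGraph V) (K : Set V) : Prop :=
  G.IsClique K ∧ ∀ K' : Set V, G.IsClique K' → K ⊆ K' → K = K'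

/-- Membership in HSTAB(G). -/
def memHSTAB (G : SimpleGraph V) (f : V → ℝ) : Prop :=
  (∀ x, 0 ≤ f x) ∧
  (∀ K : Set V, G.IsClique K → (∑ᶠ v ∈ K, f v) ≤ 1) ∧
  (∀ C : Set V, IsOddCycleSet G C → (∑ᶠ v ∈ C, f v) ≤ ((C.ncard : ℝ) - 1) / 2)

/-- Membership in TSTAB(G). -/
def memTSTAB (G : SimpleGraph V) (f : V → ℝ) : Prop :=
  (∀ x, 0 ≤ f x ∧ f x ≤ 1) ∧
  (∀ x y, G.Adj x y → f x + f y ≤ 1) ∧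
  (∀ C : Set V, IsOddCycleSet G C → (∑ᶠ v ∈ C, f v) ≤ ((C.ncard : ℝ) - 1) / 2)

/-- Membership in QSTAB(G). -/
def memQSTAB (G : SimpleGraph V) (f : V → ℝ) : Prop :=
  (∀ x, 0 ≤ f x) ∧
  (∀ K : Set V, G.IsClique K → (∑ᶠ v ∈ K, f v) ≤ 1)

/-- The stable set polytope STAB(G). -/
def STAB (G : SimpleGraph V) : Set (V → ℝ) :=
  convexHull ℝ {f : V → ℝ | ∃ S : Set V, IsStableSet G S ∧ f = S.indicator 1}

/-- The set `U^(n)` of the paper, as a predicate on pairs `(g, d)`. -/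
def memU (G : SimpleGraph V) (n : ℤ) (g : V → ℤ) (d : ℤ) : Prop :=
  (∀ v, n ≤ g v) ∧
  (∀ K : Set V, IsMaximalClique G K → (∑ᶠ v ∈ K, g v) ≤ d - n) ∧
  (∀ C : Set V, IsChordlessOddCycleSet G C → 5 ≤ C.ncard →
    2 * (∑ᶠ v ∈ C, g v) ≤ d * ((C.ncard : ℤ) - 1) - 2 * n)
/-- The 21 vertices `x_i, y_i, z_i`, `i ∈ ℤ/7ℤ`. -/
inductive Vtx : Type
  | x : ZMod 7 → Vtx
  | y : ZMod 7 → Vtx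
  | z : ZMod 7 → Vtx
  deriving DecidableEq, Fintype

/-- The oriented edge relation of the example graph. -/
def paperRel : Vtx → Vtx → Prop := fun u v =>
  (∃ i, u = Vtx.x i ∧ v = Vtx.x (i + 1)) ∨
  (∃ i, u = Vtx.x i ∧ v = Vtx.y i) ∨
  (∃ i, u = Vtx.y i ∧ v = Vtx.z i) ∨
  (∃ i, u = Vtx.z i ∧ v = Vtx.y (i + 1)) ∨
  (∃ i, u = Vtx.z i ∧ v = Vtx.z (i + 3))

instance : DecidableRel paperRel := fun u v => by
  unfold paperRel; infer_instance

/-- The example graph of the paper. -/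
def paperGraph : SimpleGraph Vtx where
  Adj u v := paperRel u v ∨ paperRel v u
  symm := ⟨fun _ _ h => Or.symm h⟩
  loopless := by
    refine ⟨?_⟩
    show ∀ a, ¬(paperRel a a ∨ paperRel a a)
    decide

/-- The function `μ` with `μ(x_i) = μ(z_i) = 4`, `μ(y_i) = 3`. -/
def muPaper : Vtx → ℤ
  | Vtx.x _ => 4
  | Vtx.y _ => 3
  | Vtx.z _ => 4

/-!
The graph is triangle-free, so every clique is a vertex or an edge, of weight at most
`8 = 10 - 2`. An odd cycle of length `m ≥ 7` has weight at most `4m ≤ 5(m - 1) - 2`, so only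
5-cycles are tight: there the bound `18` holds because every 5-cycle contains two `y`-vertices.
-/

open SimpleGraph

section General

variable {G : SimpleGraph V}

theorem finsum_mem_range_eq_sum {ι M : Type*} [Fintype ι] [AddCommMonoid M] {c : ι → V}
    (hc : c.Injective) (g : V → M) : ∑ᶠ v ∈ Set.range c, g v = ∑ i, g (c i) := by
  rw [finsum_mem_range hc, finsum_eq_sum_of_fintype]

theorem SimpleGraph.IsClique.ncard_lt_of_cliqueFree [Finite V] {n : ℕ} (hG : G.CliqueFree n)
    {K : Set V} (hK : G.IsClique K) : K.ncard < n := by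
  classical
  by_contra! h
  obtain ⟨t, htK, rfl⟩ := Set.exists_subset_card_eq h
  exact hG t.toFinite.toFinset ⟨by simpa using hK.subset htK, (Set.ncard_eq_toFinset_card t).symm⟩

theorem SimpleGraph.IsClique.finsum_le_of_cliqueFree_three [Finite V] (hG : G.CliqueFree 3)
    {g : V → ℤ} {b : ℤ} (hb : 0 ≤ b) (hv : ∀ v, g v ≤ b)
    (he : ∀ u v, G.Adj u v → g u + g v ≤ b) {K : Set V} (hK : G.IsClique K) :
    ∑ᶠ v ∈ K, g v ≤ b := by
  obtain h0 | h1 | h2 : K.ncard = 0 ∨ K.ncard = 1 ∨ K.ncard = 2 := by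
    have := hK.ncard_lt_of_cliqueFree hG; omega
  · rw [(Set.ncard_eq_zero K.toFinite).mp h0, finsum_mem_empty]
    exact hb
  · obtain ⟨a, rfl⟩ := Set.ncard_eq_one.mp h1
    rw [finsum_mem_singleton]
    exact hv a
  · obtain ⟨a, b, hab, rfl⟩ := Set.ncard_eq_two.mp h2
    rw [finsum_mem_pair hab]
    exact he a b (hK (by simp) (by simp) hab)

theorem memU_of_clique_bound_of_cycle_bound {n d : ℤ} {g : V → ℤ} (hn : ∀ v, n ≤ g v)
    (hK : ∀ K : Set V, G.IsClique K → ∑ᶠ v ∈ K, g v ≤ d - n)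
    (hC : ∀ (m : ℕ) [NeZero m] (c : ZMod m → V), Odd m → 5 ≤ m → c.Injective →
      (∀ i, G.Adj (c i) (c (i + 1))) → 2 * ∑ i, g (c i) ≤ d * ((m : ℤ) - 1) - 2 * n) :
    memU G n g d := by
  refine ⟨hn, fun K hmax => hK K hmax.1, ?_⟩
  rintro C ⟨m, c, hm3, hodd, hinj, hadj, -, rfl⟩ h5
  have : NeZero m := ⟨by omega⟩
  rw [Set.ncard_range_of_injective hinj, Nat.card_zmod] at h5 ⊢
  rw [finsum_mem_range_eq_sum hinj]
  exact hC m c hodd h5 hinj hadj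

end General

instance : DecidableRel paperGraph.Adj := fun u v =>
  inferInstanceAs (Decidable (paperRel u v ∨ paperRel v u))

def paperNbrs : Vtx → List Vtx
  | Vtx.x i => [Vtx.x (i + 1), Vtx.x (i - 1), Vtx.y i]
  | Vtx.y i => [Vtx.x i, Vtx.z i, Vtx.z (i - 1)]
  | Vtx.z i => [Vtx.y i, Vtx.y (i + 1), Vtx.z (i + 3), Vtx.z (i + 4)]

theorem paperGraph_adj_iff (a b : Vtx) : paperGraph.Adj a b ↔ b ∈ paperNbrs a := by
  cases a <;> cases b <;> (rename_i i j; revert i j) <;> decide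

theorem paperGraph_cliqueFree_three : paperGraph.CliqueFree 3 := by
  have : ∀ a, ∀ b ∈ paperNbrs a, ∀ c ∈ paperNbrs b, c ∉ paperNbrs a := by
    intro a; cases a <;> (rename_i i; revert i) <;> decide
  rintro s hs
  obtain ⟨a, b, c, hab, hac, hbc, -⟩ := is3Clique_iff.mp hs
  simp only [paperGraph_adj_iff] at hab hac hbc
  exact this a b hab c hbc hac

theorem muPaper_le_four (v : Vtx) : muPaper v ≤ 4 := by cases v <;> simp [muPaper]

theorem two_le_muPaper (v : Vtx) : 2 ≤ muPaper v := by cases v <;> simp [muPaper]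

theorem muPaper_add_le_of_adj {a b : Vtx} (h : paperGraph.Adj a b) :
    muPaper a + muPaper b ≤ 8 := by
  rw [paperGraph_adj_iff] at h
  revert b
  cases a <;> (rename_i i; revert i) <;> decide

/-- The `x`- and `z`-layers are 7-cycles, a cycle changes layer only through `y`-vertices, and
no `z`-path of length three joins the two `z`-neighbours of a `y`-vertex; so a closed 5-walk
passes through at least two `y`-vertices. -/
theorem sum_muPaper_le_of_closedWalk_five (c : ZMod 5 → Vtx)
    (hc : ∀ i, paperGraph.Adj (c i) (c (i + 1))) : ∑ i, muPaper (c i) ≤ 18 := by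
  have walk : ∀ v₀, ∀ v₁ ∈ paperNbrs v₀, ∀ v₂ ∈ paperNbrs v₁, ∀ v₃ ∈ paperNbrs v₂,
      ∀ v₄ ∈ paperNbrs v₃, v₀ ∈ paperNbrs v₄ →
        muPaper v₀ + muPaper v₁ + muPaper v₂ + muPaper v₃ + muPaper v₄ ≤ 18 := by
    intro a; cases a <;> (rename_i i; revert i) <;> decide
  have h i := (paperGraph_adj_iff _ _).mp (hc i)
  exact (Fin.sum_univ_five _).trans_le (walk _ _ (h 0) _ (h 1) _ (h 2) _ (h 3) (h 4))

/-- `(μ, 10) ∈ U^(2)`. -/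
theorem stmt13 : memU paperGraph 2 muPaper 10 := by
  refine memU_of_clique_bound_of_cycle_bound two_le_muPaper (fun K hK => ?_)
    (fun m _ c hodd h5 _ hc => ?_)
  · have := hK.finsum_le_of_cliqueFree_three paperGraph_cliqueFree_three (by norm_num)
      (fun v => (muPaper_le_four v).trans (by norm_num)) fun _ _ => muPaper_add_le_of_adj
    linarith
  obtain rfl | h7 : m = 5 ∨ 7 ≤ m := by obtain ⟨k, rfl⟩ := hodd; omega
  · have := sum_muPaper_le_of_closedWalk_five c hc
    push_cast
    linarith
  · have hsum : ∑ i, muPaper (c i) ≤ m * 4 := by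
      simpa using Finset.sum_le_card_nsmul Finset.univ _ 4 fun i _ => muPaper_le_four (c i)
    have : (7 : ℤ) ≤ m := by exact_mod_cast h7
    linarith
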